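/- arXiv:0901.3205 — 3 statements merged into one kernel-verified Lean document; each statement's English description precedes it below -/
import Mathlib

section
/- Let B = ℂ[u]⋊Γ, let [B,B] denote the ℂ-linear span of the commutators {xy − yx : x, y ∈ B}, and let W denote the ℂ-linear span of {u^{dk} : k ≥ 0} ∪ {ξ^i : 0 ≤ i ≤ d−1} (i.e. the sum of the invariant polynomial subalgebra ℂ[u]^Γ = ℂ[u^d] and the group algebra ℂ[Γ] inside B). Then B = W ⊕ [B,B] as ℂ-vector spaces; in particular the zeroth cyclic homology HC₀(B) = B/[B,B] is linearly isomorphic to ℂ[u]^Γ + ℂ[Γ]. -/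
/-!
STATEMENT 6: Let `B = ℂ[u] ⋊ Γ` (the subspace of `A = ℂ[u^{±1}] ⋊ Γ` spanned by the
`u^j ξ^i` with `j ≥ 0`), let `[B,B]` be the ℂ-span of commutators of elements of `B`,
and let `W` be the ℂ-span of `{u^{dk} : k ≥ 0} ∪ {ξ^i : 0 ≤ i ≤ d−1}` (the sum of
`ℂ[u]^Γ = ℂ[u^d]` and `ℂ[Γ]`).  Then `B = W ⊕ [B,B]` as ℂ-vector spaces.
-/

/-- Data exhibiting `A` as the skew group algebra `ℂ[u^{±1}] ⋊ (ℤ/dℤ)`,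
where `b j i` represents the basis element `u^j ξ^i`. -/
structure SkewLaurentAlgebra (d : ℕ) (ζ : ℂ) (A : Type) [Ring A] [Algebra ℂ A] where
  b : ℤ → ZMod d → A
  basis : Module.Basis (ℤ × ZMod d) ℂ A
  basis_eq : ∀ (j : ℤ) (i : ZMod d), basis (j, i) = b j i
  b_one : b 0 0 = 1
  b_mul : ∀ (j₁ j₂ : ℤ) (i₁ i₂ : ZMod d),
    b j₁ i₁ * b j₂ i₂ = (ζ ^ ((i₁.val : ℤ) * j₂)) • b (j₁ + j₂) (i₁ + i₂)

/-!
Every commutator of monomials is a multiple of a monomial: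
`[u^{j₁} ξ^{i₁}, u^{j₂} ξ^{i₂}] = (ζ^{i₁ j₂} - ζ^{i₂ j₁}) u^{j₁+j₂} ξ^{i₁+i₂}`.
The coefficient vanishes exactly when `i₁ j₂ ≡ i₂ j₁ (mod d)`, and this is
forced when `ξ^{i₁+i₂} = 1` and `d ∣ j₁ + j₂`. Conversely every other monomial of positive degree
is a nonzero multiple of `[u^{j-1}, u ξ^i]` (if `d ∣ j`, `i ≠ 0`) or of `[ξ, u^j ξ^{i-1}]`
(if `d ∤ j`). So `[B,B]` is spanned by the monomials of positive degree other than the `u^{dk}`,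
and the remaining monomials of `B` are exactly those spanning `W`.
-/

open Submodule

section Commutators

variable {R A : Type*} [CommRing R] [Ring A] [Algebra R A]

def commutatorSpan (B : Submodule R A) : Submodule R A :=
  span R {x | ∃ y ∈ B, ∃ z ∈ B, x = y * z - z * y}

theorem commutator_mem_commutatorSpan {B : Submodule R A} {y z : A} (hy : y ∈ B) (hz : z ∈ B) :
    y * z - z * y ∈ commutatorSpan B :=
  subset_span ⟨y, hy, z, hz, rfl⟩

theorem commutatorSpan_span_le {s : Set A} {M : Submodule R A}
    (h : ∀ y ∈ s, ∀ z ∈ s, y * z - z * y ∈ M) : commutatorSpan (span R s) ≤ M := by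
  let f : A →ₗ[R] A →ₗ[R] A := LinearMap.mul R A - (LinearMap.mul R A).flip
  have hf : map₂ f (span R s) (span R s) ≤ M := by
    rw [map₂_span_span, span_le]
    rintro _ ⟨y, hy, z, hz, rfl⟩
    exact h y hy z hz
  rw [commutatorSpan, span_le]
  rintro _ ⟨y, hy, z, hz, rfl⟩
  exact hf (apply_mem_map₂ f hy hz)

theorem mem_commutatorSpan_of_commutator_eq_smul {K A : Type*} [Field K] [Ring A] [Algebra K A]
    {B : Submodule K A} {y z x : A} {c : K} (hy : y ∈ B) (hz : z ∈ B) (hc : c ≠ 0)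
    (h : y * z - z * y = c • x) : x ∈ commutatorSpan B :=
  (smul_mem_iff _ hc).mp (h ▸ commutator_mem_commutatorSpan hy hz)

end Commutators

namespace IsPrimitiveRoot

variable {K : Type*} [Field K] {ζ : K} {d : ℕ} [NeZero d]

theorem zpow_eq_zpow_iff (hζ : IsPrimitiveRoot ζ d) (m n : ℤ) :
    ζ ^ m = ζ ^ n ↔ (m : ZMod d) = n := by
  have hζ0 : ζ ≠ 0 := hζ.ne_zero (NeZero.ne d)
  rw [ZMod.intCast_eq_intCast_iff_dvd_sub, ← hζ.zpow_eq_one_iff_dvd, zpow_sub₀ hζ0,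
    div_eq_one_iff_eq (zpow_ne_zero _ hζ0), eq_comm]

theorem zpow_val_mul_eq_iff (hζ : IsPrimitiveRoot ζ d) (i₁ i₂ : ZMod d) (j₁ j₂ : ℤ) :
    ζ ^ ((i₁.val : ℤ) * j₂) = ζ ^ ((i₂.val : ℤ) * j₁) ↔ i₁ * j₂ = i₂ * j₁ := by
  rw [hζ.zpow_eq_zpow_iff]
  push_cast
  rw [ZMod.natCast_zmod_val, ZMod.natCast_zmod_val]

end IsPrimitiveRoot

namespace SkewLaurentAlgebra

def polyIndex (d : ℕ) : Set (ℤ × ZMod d) := {p | 0 ≤ p.1}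

def commutatorIndex (d : ℕ) : Set (ℤ × ZMod d) := {p | 0 < p.1 ∧ (p.2 ≠ 0 ∨ (p.1 : ZMod d) ≠ 0)}

theorem commutatorIndex_subset_polyIndex (d : ℕ) : commutatorIndex d ⊆ polyIndex d :=
  fun _ hp => hp.1.le

theorem mem_polyIndex_diff_commutatorIndex {d : ℕ} {p : ℤ × ZMod d} :
    p ∈ polyIndex d \ commutatorIndex d ↔ p.1 = 0 ∨ p.2 = 0 ∧ ∃ k : ℕ, p.1 = d * k := by
  obtain ⟨j, i⟩ := p
  simp only [polyIndex, commutatorIndex, Set.mem_sdiff, Set.mem_ofPred_eq, not_and, not_or,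
    not_not]
  constructor
  · rintro ⟨hj, h⟩
    rcases hj.eq_or_lt with rfl | hj
    · exact Or.inl rfl
    obtain ⟨hi, hjd⟩ := h hj
    obtain ⟨k, rfl⟩ := (ZMod.intCast_zmod_eq_zero_iff_dvd j d).mp hjd
    lift k to ℕ using (pos_of_mul_pos_right hj (Int.natCast_nonneg d)).le
    exact Or.inr ⟨hi, k, rfl⟩
  · rintro (rfl | ⟨rfl, k, rfl⟩)
    · simp
    · refine ⟨by positivity, fun _ => ⟨rfl, by simp⟩⟩

variable {d : ℕ} {ζ : ℂ} {A : Type} [Ring A] [Algebra ℂ A] (S : SkewLaurentAlgebra d ζ A)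

theorem coe_basis : ⇑S.basis = Function.uncurry S.b :=
  funext fun p => S.basis_eq p.1 p.2

theorem span_b_nonneg :
    span ℂ {x : A | ∃ (j : ℤ) (i : ZMod d), 0 ≤ j ∧ x = S.b j i} =
      span ℂ (S.basis '' polyIndex d) := by
  rw [coe_basis]
  congr 1
  ext x
  simp [polyIndex, eq_comm]

theorem span_invariants_union_group :
    span ℂ ({x : A | ∃ k : ℕ, x = S.b ((d : ℤ) * k) 0} ∪ {x : A | ∃ i : ZMod d, x = S.b 0 i}) =
      span ℂ (S.basis '' (polyIndex d \ commutatorIndex d)) := by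
  rw [coe_basis]
  congr 1
  ext x
  simp only [Set.mem_union, Set.mem_ofPred_eq, Set.mem_image, mem_polyIndex_diff_commutatorIndex]
  constructor
  · rintro (⟨k, rfl⟩ | ⟨i, rfl⟩)
    · exact ⟨(d * k, 0), Or.inr ⟨rfl, k, rfl⟩, rfl⟩
    · exact ⟨(0, i), Or.inl rfl, rfl⟩
  · rintro ⟨⟨j, i⟩, (rfl | ⟨rfl, k, rfl⟩), rfl⟩
    · exact Or.inr ⟨i, rfl⟩
    · exact Or.inl ⟨k, rfl⟩

theorem commutator_b (j₁ j₂ : ℤ) (i₁ i₂ : ZMod d) :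
    S.b j₁ i₁ * S.b j₂ i₂ - S.b j₂ i₂ * S.b j₁ i₁ =
      (ζ ^ ((i₁.val : ℤ) * j₂) - ζ ^ ((i₂.val : ℤ) * j₁)) • S.b (j₁ + j₂) (i₁ + i₂) := by
  rw [S.b_mul, S.b_mul, add_comm j₂, add_comm i₂, sub_smul]

variable [NeZero d]

theorem commutator_b_mem_span_commutatorIndex (hζ : IsPrimitiveRoot ζ d) {j₁ j₂ : ℤ}
    (hj₁ : 0 ≤ j₁) (hj₂ : 0 ≤ j₂) (i₁ i₂ : ZMod d) :
    S.b j₁ i₁ * S.b j₂ i₂ - S.b j₂ i₂ * S.b j₁ i₁ ∈ span ℂ (S.basis '' commutatorIndex d) := by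
  rw [S.commutator_b]
  by_cases hp : (j₁ + j₂, i₁ + i₂) ∈ commutatorIndex d
  · exact smul_mem _ _ (subset_span ⟨_, hp, S.basis_eq _ _⟩)
  have hcoeff : ζ ^ ((i₁.val : ℤ) * j₂) - ζ ^ ((i₂.val : ℤ) * j₁) = 0 := by
    rw [sub_eq_zero, hζ.zpow_val_mul_eq_iff]
    simp only [commutatorIndex, Set.mem_ofPred_eq, not_and, not_or, not_not] at hp
    rcases (add_nonneg hj₁ hj₂).eq_or_lt with hj | hj
    · obtain ⟨rfl, rfl⟩ : j₁ = 0 ∧ j₂ = 0 := by omega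
      simp
    · obtain ⟨hi, hjd⟩ := hp hj
      push_cast at hjd
      linear_combination i₁ * hjd - (j₁ : ZMod d) * hi
  rw [hcoeff, zero_smul]
  exact zero_mem _

theorem b_mem_commutatorSpan (hζ : IsPrimitiveRoot ζ d) {j : ℤ} {i : ZMod d}
    (hp : (j, i) ∈ commutatorIndex d) :
    S.b j i ∈ commutatorSpan (span ℂ (S.basis '' polyIndex d)) := by
  obtain ⟨hj, hp⟩ := hp
  have hB (j' : ℤ) (i' : ZMod d) (hj' : 0 ≤ j') : S.b j' i' ∈ span ℂ (S.basis '' polyIndex d) :=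
    subset_span ⟨(j', i'), hj', S.basis_eq j' i'⟩
  by_cases hjd : (j : ZMod d) = 0
  · have hi : i ≠ 0 := hp.resolve_right (not_not.mpr hjd)
    have h := S.commutator_b (j - 1) 1 0 i
    rw [sub_add_cancel, zero_add] at h
    refine mem_commutatorSpan_of_commutator_eq_smul (hB _ _ (by omega)) (hB _ _ zero_le_one) ?_ h
    rw [sub_ne_zero, Ne, hζ.zpow_val_mul_eq_iff]
    push_cast
    rw [hjd]
    simpa [eq_comm] using hi
  · have h := S.commutator_b 0 j 1 (i - 1)
    rw [zero_add, add_sub_cancel] at h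
    refine mem_commutatorSpan_of_commutator_eq_smul (hB _ _ le_rfl) (hB _ _ hj.le) ?_ h
    rw [sub_ne_zero, Ne, hζ.zpow_val_mul_eq_iff]
    simpa using hjd

theorem commutatorSpan_eq (hζ : IsPrimitiveRoot ζ d) :
    commutatorSpan (span ℂ (S.basis '' polyIndex d)) = span ℂ (S.basis '' commutatorIndex d) := by
  refine le_antisymm (commutatorSpan_span_le ?_) (span_le.mpr ?_)
  · rintro _ ⟨⟨j₁, i₁⟩, hj₁, rfl⟩ _ ⟨⟨j₂, i₂⟩, hj₂, rfl⟩
    simpa only [S.basis_eq] using S.commutator_b_mem_span_commutatorIndex hζ hj₁ hj₂ i₁ i₂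
  · rintro _ ⟨⟨j, i⟩, hp, rfl⟩
    rw [S.basis_eq]
    exact S.b_mem_commutatorSpan hζ hp

end SkewLaurentAlgebra

theorem stmt_6 (d : ℕ) (hd : 0 < d) (ζ : ℂ) (hζ : IsPrimitiveRoot ζ d)
    (A : Type) [Ring A] [Algebra ℂ A] (S : SkewLaurentAlgebra d ζ A)
    (B W C : Submodule ℂ A)
    (hB : B = Submodule.span ℂ {x : A | ∃ (j : ℤ) (i : ZMod d), 0 ≤ j ∧ x = S.b j i})
    (hW : W = Submodule.span ℂ
        ({x : A | ∃ k : ℕ, x = S.b ((d : ℤ) * k) 0}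
          ∪ {x : A | ∃ i : ZMod d, x = S.b 0 i}))
    (hC : C = Submodule.span ℂ {x : A | ∃ y ∈ B, ∃ z ∈ B, x = y * z - z * y}) :
    B = W ⊔ C ∧ W ⊓ C = ⊥ := by
  have : NeZero d := ⟨hd.ne'⟩
  rw [S.span_b_nonneg] at hB
  rw [S.span_invariants_union_group] at hW
  replace hC : C = span ℂ (S.basis '' SkewLaurentAlgebra.commutatorIndex d) := by
    rw [hC, ← S.commutatorSpan_eq hζ, hB]
    rfl
  subst hB hW hC
  rw [← span_union, ← Set.image_union, Set.sdiff_union_of_subset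
    (SkewLaurentAlgebra.commutatorIndex_subset_polyIndex d)]
  exact ⟨rfl, (S.basis.linearIndependent.disjoint_span_image Set.disjoint_sdiff_left).eq_bot⟩
end

section
/- For every n ≥ 1 and d ≥ 1, the Lie algebra 𝔰𝔩_n(ℂ[u^{±1},v^{±1}]⋊Γ) is isomorphic, as a Lie algebra over ℂ, to the toroidal Lie algebra 𝔰𝔩_{nd}(ℂ[s^{±1},t^{±1}]), where ℂ[s^{±1},t^{±1}] is the Laurent polynomial ring in two variables. -/
/-!
The skew group algebra is itself a `d × d` matrix algebra over `ℂ[s^{±1}, t^{±1}]`. Index rows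
and columns by `ℤ/d`, send `ξ` to the clock matrix `diag(ζ^j)`, `u` to the cyclic shift matrix
whose wrap-around entry is `s` (so that `u^d = s`), and `v` to `t u⁻¹`; thus
`u^a v^b ξ^c ↦ t^b · shift^(a-b) · clock^c`. The relation `clock · shift = ζ · shift · clock`
makes this multiplicative, and the orthogonality of the characters `j ↦ ζ^(c j)` gives an
explicit inverse. Hence `𝔤𝔩_n` of the skew algebra is `𝔤𝔩_{nd}(ℂ[s^{±1}, t^{±1}])`, already as
associative algebras, and a Lie algebra isomorphism restricts to the derived subalgebras.
In `ℂ[T;T⁻¹][T;T⁻¹]`, `s` is the outer variable `T` and `t = C T`.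
-/

/-- Data exhibiting `A` as the skew group algebra `ℂ[u^{±1}, v^{±1}] ⋊ (ℤ/dℤ)`,
where `b a b' c` represents the basis element `u^a v^{b'} ξ^c`. -/
structure SkewLaurent2Algebra (d : ℕ) (ζ : ℂ) (A : Type) [Ring A] [Algebra ℂ A] where
  b : ℤ → ℤ → ZMod d → A
  basis : Module.Basis (ℤ × ℤ × ZMod d) ℂ A
  basis_eq : ∀ (a b' : ℤ) (c : ZMod d), basis (a, b', c) = b a b' c
  b_one : b 0 0 0 = 1
  b_mul : ∀ (a b' : ℤ) (c : ZMod d) (e f : ℤ) (g : ZMod d),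
    b a b' c * b e f g = (ζ ^ ((c.val : ℤ) * (e - f))) • b (a + e) (b' + f) (c + g)

open LaurentPolynomial

noncomputable section

lemma Int.emod_add_ediv_add {d : ℤ} (hd : d ≠ 0) (x k : ℤ) :
    (x % d + k) / d + x / d = (x + k) / d := by
  rw [← Int.add_mul_ediv_left _ _ hd, add_right_comm, Int.emod_add_mul_ediv]

lemma ZMod.val_add_intCast {d : ℕ} [NeZero d] (j : ZMod d) (k : ℤ) :
    ((j + k).val : ℤ) = (j.val + k) % d := by
  rw [← ZMod.val_intCast]; push_cast [ZMod.natCast_val, ZMod.cast_id]; rfl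

lemma AddChar.zmodChar_intCast {K : Type*} [Field K] {d : ℕ} [NeZero d] {ζ : K} (hζ : ζ ^ d = 1)
    (z : ℤ) : AddChar.zmodChar d hζ z = ζ ^ z := by
  have hζ0 : ζ ≠ 0 := by rintro rfl; simp [NeZero.ne d] at hζ
  conv_rhs => rw [← Int.emod_add_mul_ediv z d]
  rw [zpow_add₀ hζ0, zpow_mul, zpow_natCast, hζ, one_zpow, mul_one, AddChar.zmodChar_apply,
    ← zpow_natCast, ZMod.val_intCast]

lemma AddChar.sum_mul_mul_neg {K : Type*} [CommRing K] [IsDomain K] {d : ℕ} [NeZero d]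
    {χ : AddChar (ZMod d) K} (hχ : χ.IsPrimitive) (a b : ZMod d) :
    ∑ x, χ (a * x) * χ (-(b * x)) = if a = b then (d : K) else 0 := by
  simp_rw [mul_comm a, mul_comm b, ← AddChar.map_add_eq_mul, ← sub_eq_add_neg, ← mul_sub]
  rw [AddChar.sum_mulShift _ hχ, ZMod.card]
  simp only [sub_eq_zero, apply_ite Nat.cast, Nat.cast_zero]

lemma Module.Basis.map_mul_of_map_basis_mul {R A B ι : Type*} [CommSemiring R] [Semiring A]
    [Semiring B] [Algebra R A] [Algebra R B] (b : Module.Basis ι R A) (f : A →ₗ[R] B)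
    (h : ∀ i j, f (b i * b j) = f (b i) * f (b j)) (x y : A) : f (x * y) = f x * f y :=
  LinearMap.congr_fun₂ (LinearMap.ext_basis b b (B := (LinearMap.mul R A).compr₂ f)
    (B' := (LinearMap.mul R B).compl₁₂ f f) h) x y

namespace LaurentPolynomial

variable {R : Type*} [CommSemiring R] (d : ℕ)

/-- The matrix of multiplication by `u^k` on `R[u^{±1}]`, viewed as a free module over
`R[T^{±1}]` with `T = u^d` and basis `u^j` (`j ∈ ℤ/d`, represented by `0 ≤ j.val < d`):
`u^k u^j = T^⌊(j + k) / d⌋ u^((j + k) mod d)`. -/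
def shiftMatrix (k : ℤ) : Matrix (ZMod d) (ZMod d) R[T;T⁻¹] :=
  Matrix.of fun i j => if i = j + k then T (((j.val : ℤ) + k) / d) else 0

variable {d}

lemma shiftMatrix_apply (k : ℤ) (i j : ZMod d) :
    shiftMatrix d k i j = if i = j + k then (T (((j.val : ℤ) + k) / d) : R[T;T⁻¹]) else 0 :=
  rfl

variable [NeZero d]

lemma shiftMatrix_zero : (shiftMatrix d 0 : Matrix _ _ R[T;T⁻¹]) = 1 := by
  refine Matrix.ext fun i j => ?_
  rw [shiftMatrix_apply, Matrix.one_apply, Int.cast_zero, add_zero, add_zero,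
    Int.ediv_eq_zero_of_lt (by positivity) (by exact_mod_cast ZMod.val_lt j), T_zero]

lemma shiftMatrix_mul (k l : ℤ) :
    (shiftMatrix d k * shiftMatrix d l : Matrix _ _ R[T;T⁻¹]) = shiftMatrix d (k + l) := by
  refine Matrix.ext fun i m => ?_
  rw [Matrix.mul_apply, Finset.sum_eq_single (m + l) (fun j _ hj => by
    simp [shiftMatrix_apply, hj]) (by simp)]
  rw [shiftMatrix_apply, shiftMatrix_apply l, if_pos rfl, shiftMatrix_apply, ite_mul, zero_mul,
    ← T_add, ZMod.val_add_intCast, Int.emod_add_ediv_add (NeZero.ne _), Int.cast_add, add_assoc,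
    add_comm (l : ZMod d), add_assoc (m.val : ℤ), add_comm l k]

lemma shiftMatrix_mul_single (k : ℤ) (j : ZMod d) (x : R[T;T⁻¹]) :
    shiftMatrix d k * Matrix.single j j x =
      Matrix.single (j + k) j (T (((j.val : ℤ) + k) / d) * x) := by
  refine Matrix.ext fun a b => ?_
  by_cases hb : b = j
  · subst hb
    rw [Matrix.mul_single_apply_same, shiftMatrix_apply]
    by_cases ha : a = b + k
    · simp [ha]
    · simp [Matrix.single, ha, Ne.symm ha]
  · rw [Matrix.mul_single_apply_of_ne _ _ _ _ _ hb, Matrix.single_apply_of_col_ne _ _ (Ne.symm hb)]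

end LaurentPolynomial

section Clock

variable {K B : Type*} [CommRing K] [Semiring B] [Algebra K B] {d : ℕ}

variable (B) in
def clockMatrix (χ : AddChar (ZMod d) K) (c : ZMod d) : Matrix (ZMod d) (ZMod d) B :=
  Matrix.diagonal fun j => algebraMap K B (χ (c * j))

variable (χ : AddChar (ZMod d) K)

lemma clockMatrix_zero : clockMatrix B χ 0 = 1 := by
  simp [clockMatrix]

variable [NeZero d]

lemma clockMatrix_mul (c g : ZMod d) :
    clockMatrix B χ c * clockMatrix B χ g = clockMatrix B χ (c + g) := by
  simp only [clockMatrix, Matrix.diagonal_mul_diagonal, ← map_mul, ← AddChar.map_add_eq_mul,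
    add_mul]

lemma clockMatrix_eq_sum (c : ZMod d) :
    clockMatrix B χ c = ∑ j, χ (c * j) • Matrix.single j j 1 := by
  rw [clockMatrix, ← Matrix.sum_single_eq_diagonal]
  refine Finset.sum_congr rfl fun j _ => ?_
  rw [Matrix.smul_single, Algebra.algebraMap_eq_smul_one]

lemma sum_smul_clockMatrix [IsDomain K] (hχ : χ.IsPrimitive) (j : ZMod d) :
    ∑ c, χ (-(c * j)) • clockMatrix B χ c = (d : K) • Matrix.single j j 1 := by
  refine Matrix.ext fun i k => ?_
  rw [Matrix.sum_apply]
  by_cases hik : i = k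
  · subst hik
    have hsum : ∑ c, χ (-(c * j)) * χ (c * i) = if i = j then (d : K) else 0 := by
      rw [← AddChar.sum_mul_mul_neg hχ i j]
      simp only [mul_comm]
    simp only [Matrix.smul_apply, clockMatrix, Matrix.diagonal_apply_eq, Algebra.smul_def,
      ← map_mul, ← map_sum, hsum]
    by_cases hij : i = j
    · simp [hij]
    · simp [hij, Matrix.single_apply_of_row_ne (Ne.symm hij)]
  · have hzero : Matrix.single j j (1 : B) i k = 0 :=
      Matrix.single_apply_of_ne _ _ _ _ _ (by rintro ⟨rfl, rfl⟩; exact hik rfl)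
    simp [clockMatrix, Matrix.diagonal_apply_ne _ hik, hzero]

lemma clockMatrix_mul_shiftMatrix {R : Type*} [CommRing R] [Algebra K R] (c : ZMod d) (k : ℤ) :
    clockMatrix R[T;T⁻¹] χ c * shiftMatrix d k =
      χ (c * k) • (shiftMatrix d k * clockMatrix R[T;T⁻¹] χ c) := by
  refine Matrix.ext fun i j => ?_
  simp only [Matrix.smul_apply, clockMatrix, Matrix.diagonal_mul, Matrix.mul_diagonal,
    shiftMatrix_apply]
  split_ifs with h
  · rw [h, mul_add, AddChar.map_add_eq_mul, map_mul, Algebra.smul_def]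
    ring
  · simp

end Clock

namespace LaurentPolynomial

variable (R : Type*) [CommRing R]

def monomialBasis₂ : Module.Basis (ℤ × ℤ) R R[T;T⁻¹][T;T⁻¹] :=
  (AddMonoidAlgebra.basis ℤ R).smulTower (AddMonoidAlgebra.basis ℤ R[T;T⁻¹])

variable {R}

lemma monomialBasis₂_apply (p m : ℤ) : monomialBasis₂ R (p, m) = C (T p) * T m := by
  rw [monomialBasis₂, Module.Basis.smulTower_apply, smul_eq_C_mul]
  rfl

end LaurentPolynomial

section SkewMatrix

variable {d : ℕ} [NeZero d] (χ : AddChar (ZMod d) ℂ)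

def skewMatrix (a b : ℤ) (c : ZMod d) : Matrix (ZMod d) (ZMod d) ℂ[T;T⁻¹][T;T⁻¹] :=
  C (T b : ℂ[T;T⁻¹]) • (shiftMatrix d (a - b) * clockMatrix ℂ[T;T⁻¹][T;T⁻¹] χ c)

lemma skewMatrix_zero : skewMatrix χ 0 0 0 = 1 := by
  simp [skewMatrix, shiftMatrix_zero, clockMatrix_zero]

lemma skewMatrix_mul (a b : ℤ) (c : ZMod d) (e f : ℤ) (g : ZMod d) :
    skewMatrix χ a b c * skewMatrix χ e f g =
      χ (c * (e - f : ℤ)) • skewMatrix χ (a + e) (b + f) (c + g) := by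
  have hshift : a + e - (b + f) = (a - b) + (e - f) := by ring
  rw [skewMatrix, skewMatrix, skewMatrix, Matrix.smul_mul, Matrix.mul_smul, smul_smul, ← map_mul,
    ← T_add, hshift, ← shiftMatrix_mul, ← clockMatrix_mul, smul_comm (χ _)]
  congr 1
  calc _ = shiftMatrix d (a - b) * (clockMatrix _ χ c * shiftMatrix d (e - f)) *
        clockMatrix _ χ g := by simp only [mul_assoc]
    _ = _ := by
      rw [clockMatrix_mul_shiftMatrix, Matrix.mul_smul, Matrix.smul_mul]
      simp only [mul_assoc]

lemma skewMatrix_eq_sum (a b : ℤ) (c : ZMod d) :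
    skewMatrix χ a b c = ∑ j, χ (c * j) •
      Matrix.single (j + (a - b : ℤ)) j (C (T b) * T (((j.val : ℤ) + (a - b)) / d)) := by
  rw [skewMatrix, clockMatrix_eq_sum, Matrix.mul_sum, Finset.smul_sum]
  refine Finset.sum_congr rfl fun j _ => ?_
  rw [Matrix.mul_smul, shiftMatrix_mul_single, smul_comm, Matrix.smul_single, smul_eq_mul, mul_one]

lemma sum_smul_skewMatrix (hχ : χ.IsPrimitive) (b k : ℤ) (j : ZMod d) :
    ∑ c, χ (-(c * j)) • skewMatrix χ (b + k) b c =
      (d : ℂ) • Matrix.single (j + k) j (C (T b) * T (((j.val : ℤ) + k) / d)) := by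
  simp_rw [skewMatrix, add_sub_cancel_left, smul_comm (χ _) (C _)]
  rw [← Finset.smul_sum]
  simp_rw [← Matrix.mul_smul]
  rw [← Matrix.mul_sum, sum_smul_clockMatrix χ hχ, Matrix.mul_smul,
    shiftMatrix_mul_single, smul_comm, Matrix.smul_single, smul_eq_mul, mul_one]

end SkewMatrix

namespace SkewLaurent2Algebra

variable {d : ℕ} [NeZero d] {ζ : ℂ} {A : Type} [Ring A] [Algebra ℂ A]
  (S : SkewLaurent2Algebra d ζ A)

def toMatrix (hζ : ζ ^ d = 1) : A →ₗ[ℂ] Matrix (ZMod d) (ZMod d) ℂ[T;T⁻¹][T;T⁻¹] :=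
  S.basis.constr ℂ fun q => skewMatrix (AddChar.zmodChar d hζ) q.1 q.2.1 q.2.2

lemma toMatrix_b (hζ : ζ ^ d = 1) (a b : ℤ) (c : ZMod d) :
    S.toMatrix hζ (S.b a b c) = skewMatrix (AddChar.zmodChar d hζ) a b c := by
  rw [← S.basis_eq, toMatrix, Module.Basis.constr_basis]

lemma toMatrix_one (hζ : ζ ^ d = 1) : S.toMatrix hζ 1 = 1 := by
  rw [← S.b_one, toMatrix_b, skewMatrix_zero]

lemma toMatrix_mul (hζ : ζ ^ d = 1) (x y : A) :
    S.toMatrix hζ (x * y) = S.toMatrix hζ x * S.toMatrix hζ y := by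
  refine S.basis.map_mul_of_map_basis_mul _ (fun ⟨a, b, c⟩ ⟨e, f, g⟩ => ?_) x y
  have hcoeff : ζ ^ ((c.val : ℤ) * (e - f)) = AddChar.zmodChar d hζ (c * (e - f : ℤ)) := by
    rw [← AddChar.zmodChar_intCast hζ]
    push_cast [ZMod.natCast_val, ZMod.cast_id']
    rfl
  rw [S.basis_eq, S.basis_eq, S.b_mul, map_smul, toMatrix_b, toMatrix_b, toMatrix_b,
    skewMatrix_mul, hcoeff]

/-- `d⁻¹ ∑_c ζ^(-c j) ξ^c` is the idempotent that `toMatrix` sends to `E_jj`, and multiplying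
it on the left by `u^(i - j) (u^d)^m (u v)^p` yields the preimage of `E_ij s^m t^p`. -/
def ofMatrix (hζ : ζ ^ d = 1) : Matrix (ZMod d) (ZMod d) ℂ[T;T⁻¹][T;T⁻¹] →ₗ[ℂ] A :=
  ((LaurentPolynomial.monomialBasis₂ ℂ).matrix (ZMod d) (ZMod d)).constr ℂ fun ⟨i, j, p, m⟩ =>
    (d : ℂ)⁻¹ • ∑ c, AddChar.zmodChar d hζ (-(c * j)) •
      S.b (p + i.val - j.val + d * m) p c

lemma ofMatrix_single (hζ : ζ ^ d = 1) (i j : ZMod d) (p m : ℤ) :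
    S.ofMatrix hζ (Matrix.single i j (C (T p) * T m)) = (d : ℂ)⁻¹ • ∑ c,
      AddChar.zmodChar d hζ (-(c * j)) • S.b (p + i.val - j.val + d * m) p c := by
  rw [← LaurentPolynomial.monomialBasis₂_apply, ← Module.Basis.matrix_apply, ofMatrix,
    Module.Basis.constr_basis]

lemma toMatrix_ofMatrix (hζ : IsPrimitiveRoot ζ d) :
    S.toMatrix hζ.pow_eq_one ∘ₗ S.ofMatrix hζ.pow_eq_one = LinearMap.id := by
  refine ((LaurentPolynomial.monomialBasis₂ ℂ).matrix (ZMod d) (ZMod d)).ext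
    fun ⟨i, j, p, m⟩ => ?_
  have hrow : j + ((i.val - j.val + d * m : ℤ) : ZMod d) = i := by
    push_cast [ZMod.natCast_val, ZMod.cast_id', ZMod.natCast_self]
    ring
  have hexp : ((j.val : ℤ) + (i.val - j.val + d * m)) / d = m := by
    rw [show (j.val : ℤ) + (i.val - j.val + d * m) = i.val + d * m by ring,
      Int.add_mul_ediv_left _ _ (NeZero.ne _),
      Int.ediv_eq_zero_of_lt (by positivity) (by exact_mod_cast ZMod.val_lt i), zero_add]
  have hd : (d : ℂ) ≠ 0 := NeZero.ne _
  rw [Module.Basis.matrix_apply, LaurentPolynomial.monomialBasis₂_apply, LinearMap.comp_apply,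
    ofMatrix_single, map_smul, map_sum]
  simp only [map_smul, toMatrix_b, add_sub_assoc, add_assoc (p : ℤ)]
  rw [sum_smul_skewMatrix _ (AddChar.zmodChar_primitive_of_primitive_root d hζ), hrow, hexp,
    inv_smul_smul₀ hd, LinearMap.id_apply]

lemma ofMatrix_toMatrix (hζ : IsPrimitiveRoot ζ d) :
    S.ofMatrix hζ.pow_eq_one ∘ₗ S.toMatrix hζ.pow_eq_one = LinearMap.id := by
  refine S.basis.ext fun ⟨a, b, c⟩ => ?_
  have hindex : ∀ j : ZMod d, b + ((j + ((a - b : ℤ) : ZMod d)).val : ℤ) - j.val +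
      d * ((j.val + (a - b)) / d) = a := by
    intro j
    rw [ZMod.val_add_intCast, add_sub_right_comm, add_assoc, Int.emod_add_mul_ediv]
    ring
  rw [LinearMap.comp_apply, S.basis_eq, toMatrix_b, skewMatrix_eq_sum, map_sum]
  simp only [map_smul, ofMatrix_single, hindex, Finset.smul_sum, smul_smul]
  rw [Finset.sum_comm]
  simp only [← Finset.sum_smul, mul_left_comm _ (d : ℂ)⁻¹, ← Finset.mul_sum]
  simp only [AddChar.sum_mul_mul_neg (AddChar.zmodChar_primitive_of_primitive_root d hζ),
    mul_ite, mul_zero, ite_smul, zero_smul, Finset.sum_ite_eq, Finset.mem_univ, if_true,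
    inv_mul_cancel₀ (NeZero.ne (d : ℂ)), one_smul, LinearMap.id_apply]

def equivMatrix (hζ : IsPrimitiveRoot ζ d) :
    A ≃ₐ[ℂ] Matrix (ZMod d) (ZMod d) ℂ[T;T⁻¹][T;T⁻¹] :=
  AlgEquiv.ofLinearEquiv
    (LinearEquiv.ofLinearMap _ _ (S.toMatrix_ofMatrix hζ) (S.ofMatrix_toMatrix hζ))
    (S.toMatrix_one _) (S.toMatrix_mul _)

end SkewLaurent2Algebra

section DerivedAlgebra

variable {R L₁ L₂ : Type*} [CommRing R] [LieRing L₁] [LieAlgebra R L₁] [LieRing L₂]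
  [LieAlgebra R L₂] (e : L₁ ≃ₗ⁅R⁆ L₂)

lemma LieEquiv.map_toLieSubalgebra_bracket_top :
    (⁅(⊤ : LieIdeal R L₁), ⊤⁆ : LieIdeal R L₁).toLieSubalgebra.map e.toLieHom =
      (⁅(⊤ : LieIdeal R L₂), ⊤⁆ : LieIdeal R L₂).toLieSubalgebra := by
  have hs : Function.Surjective e.toLieHom := e.surjective
  have htop : LieIdeal.map e.toLieHom ⊤ = ⊤ := by
    rw [← LieHom.idealRange_eq_map, e.toLieHom.idealRange_eq_top_of_surjective hs]
  have hmap := LieIdeal.coe_map_of_surjective (I := ⁅(⊤ : LieIdeal R L₁), ⊤⁆) hs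
  rw [LieIdeal.map_bracket_eq _ hs, htop] at hmap
  exact LieSubalgebra.toSubmodule_injective hmap.symm

def LieEquiv.bracketTopEquiv :
    (⁅(⊤ : LieIdeal R L₁), ⊤⁆ : LieIdeal R L₁) ≃ₗ⁅R⁆ (⁅(⊤ : LieIdeal R L₂), ⊤⁆ : LieIdeal R L₂) :=
  e.ofSubalgebras _ _ e.map_toLieSubalgebra_bracket_top

end DerivedAlgebra

end

attribute [local instance 100] LieRing.ofAssociativeRing

theorem stmt_11_general (d : ℕ) (hd : 0 < d) (ζ : ℂ) (hζ : IsPrimitiveRoot ζ d)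
    (A : Type) [Ring A] [Algebra ℂ A] (S : SkewLaurent2Algebra d ζ A)
    (n : ℕ) :
    Nonempty
      ((⁅(⊤ : LieIdeal ℂ (Matrix (Fin n) (Fin n) A)),
          (⊤ : LieIdeal ℂ (Matrix (Fin n) (Fin n) A))⁆ :
          LieIdeal ℂ (Matrix (Fin n) (Fin n) A))
        ≃ₗ⁅ℂ⁆
        (⁅(⊤ : LieIdeal ℂ (Matrix (Fin (n * d)) (Fin (n * d))
              (LaurentPolynomial (LaurentPolynomial ℂ)))),
          (⊤ : LieIdeal ℂ (Matrix (Fin (n * d)) (Fin (n * d))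
              (LaurentPolynomial (LaurentPolynomial ℂ))))⁆ :
          LieIdeal ℂ (Matrix (Fin (n * d)) (Fin (n * d))
            (LaurentPolynomial (LaurentPolynomial ℂ))))) := by
  have : NeZero d := ⟨hd.ne'⟩
  let blocks : Fin n × ZMod d ≃ Fin (n * d) :=
    ((Equiv.refl _).prodCongr (ZMod.finEquiv d).symm.toEquiv).trans finProdFinEquiv
  let e : Matrix (Fin n) (Fin n) A ≃ₐ[ℂ] Matrix (Fin (n * d)) (Fin (n * d)) ℂ[T;T⁻¹][T;T⁻¹] :=
    (S.equivMatrix hζ).mapMatrix.trans <|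
      (Matrix.compAlgEquiv _ _ _ ℂ).trans (Matrix.reindexAlgEquiv ℂ _ blocks)
  exact ⟨e.toLieEquiv.bracketTopEquiv⟩

theorem stmt_11 (d : ℕ) (hd : 0 < d) (ζ : ℂ) (hζ : IsPrimitiveRoot ζ d)
    (A : Type) [Ring A] [Algebra ℂ A] (S : SkewLaurent2Algebra d ζ A)
    (n : ℕ) (hn : 1 ≤ n) :
    Nonempty
      ((⁅(⊤ : LieIdeal ℂ (Matrix (Fin n) (Fin n) A)),
          (⊤ : LieIdeal ℂ (Matrix (Fin n) (Fin n) A))⁆ :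
          LieIdeal ℂ (Matrix (Fin n) (Fin n) A))
        ≃ₗ⁅ℂ⁆
        (⁅(⊤ : LieIdeal ℂ (Matrix (Fin (n * d)) (Fin (n * d))
              (LaurentPolynomial (LaurentPolynomial ℂ)))),
          (⊤ : LieIdeal ℂ (Matrix (Fin (n * d)) (Fin (n * d))
              (LaurentPolynomial (LaurentPolynomial ℂ))))⁆ :
          LieIdeal ℂ (Matrix (Fin (n * d)) (Fin (n * d))
            (LaurentPolynomial (LaurentPolynomial ℂ))))) :=
  stmt_11_general d hd ζ hζ A S n
end

section
/- Let A = ℂ[u^{±1},v^{±1}]⋊Γ, let [A,A] denote the ℂ-linear span of the commutators {xy − yx : x, y ∈ A}, and let A^Γ denote the ℂ-span of the monomials {u^a v^b : a, b ∈ ℤ, a ≡ b mod d} (the Γ-invariant Laurent polynomials). Then A = A^Γ ⊕ [A,A] as ℂ-vector spaces; in particular the zeroth cyclic homology HC₀(A) = A/[A,A] is linearly isomorphic to A^Γ. -/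
theorem IsPrimitiveRoot.zpow_eq_zpow_iff_s13 {G₀ : Type*} [CommGroupWithZero G₀] {ζ : G₀} {d : ℕ}
    [NeZero d] (hζ : IsPrimitiveRoot ζ d) (m n : ℤ) : ζ ^ m = ζ ^ n ↔ (m : ZMod d) = n := by
  have hζ0 : ζ ≠ 0 := hζ.ne_zero (NeZero.ne d)
  rw [ZMod.intCast_eq_intCast_iff_dvd_sub, ← hζ.zpow_eq_one_iff_dvd, zpow_sub₀ hζ0,
    div_eq_one_iff_eq (zpow_ne_zero _ hζ0), eq_comm]

theorem Submodule.span_commutators_le_of_basis {ι R A : Type*} [CommRing R] [Ring A] [Algebra R A]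
    (B : Module.Basis ι R A) {W : Submodule R A} (h : ∀ i j, B i * B j - B j * B i ∈ W) :
    span R {x : A | ∃ y z : A, x = y * z - z * y} ≤ W := by
  set commutator : A →ₗ[R] A →ₗ[R] A := LinearMap.mul R A - (LinearMap.mul R A).flip
  have hmap : map₂ commutator ⊤ ⊤ ≤ W := by
    rw [← B.span_eq, map₂_span_span, span_le]
    rintro _ ⟨_, ⟨i, rfl⟩, _, ⟨j, rfl⟩, rfl⟩
    simpa [commutator] using h i j
  rw [span_le]
  rintro _ ⟨y, z, rfl⟩
  simpa [commutator] using hmap (apply_mem_map₂ commutator (mem_top (x := y)) (mem_top (x := z)))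

namespace SkewLaurent2Algebra

open Submodule

def invariantIndices (d : ℕ) : Set (ℤ × ℤ × ZMod d) :=
  {p | p.2.2 = 0 ∧ (p.1 : ZMod d) = p.2.1}

variable {d : ℕ} {ζ : ℂ} {A : Type} [Ring A] [Algebra ℂ A] (S : SkewLaurent2Algebra d ζ A)

theorem b_commutator (a b' : ℤ) (c : ZMod d) (e f : ℤ) (g : ZMod d) :
    S.b a b' c * S.b e f g - S.b e f g * S.b a b' c =
      (ζ ^ ((c.val : ℤ) * (e - f)) - ζ ^ ((g.val : ℤ) * (a - b'))) •
        S.b (a + e) (b' + f) (c + g) := by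
  rw [S.b_mul, S.b_mul, add_comm e, add_comm f, add_comm g, sub_smul]

theorem commutator_coeff_eq_zero_iff [NeZero d] (hζ : IsPrimitiveRoot ζ d)
    (a b' : ℤ) (c : ZMod d) (e f : ℤ) (g : ZMod d) :
    ζ ^ ((c.val : ℤ) * (e - f)) - ζ ^ ((g.val : ℤ) * (a - b')) = 0 ↔
      c * (e - f) = g * (a - b') := by
  rw [sub_eq_zero, hζ.zpow_eq_zpow_iff_s13]
  push_cast
  rw [ZMod.natCast_zmod_val, ZMod.natCast_zmod_val]

theorem basis_commutator_mem_span_compl [NeZero d] (hζ : IsPrimitiveRoot ζ d)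
    (p q : ℤ × ℤ × ZMod d) :
    S.basis p * S.basis q - S.basis q * S.basis p ∈
      span ℂ (S.basis '' (invariantIndices d)ᶜ) := by
  obtain ⟨a, b', c⟩ := p
  obtain ⟨e, f, g⟩ := q
  rw [S.basis_eq, S.basis_eq, S.b_commutator, ← S.basis_eq]
  by_cases hinv : (a + e, b' + f, c + g) ∈ invariantIndices d
  · obtain ⟨hcg, hsum⟩ : c + g = 0 ∧ (a : ZMod d) + e = b' + f := by
      simpa [invariantIndices] using hinv
    have hcoeff : c * (e - f) = g * (a - b') := by
      linear_combination (e - f : ZMod d) * hcg - g * hsum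
    rw [(commutator_coeff_eq_zero_iff hζ ..).2 hcoeff, zero_smul]
    exact zero_mem _
  · exact smul_mem _ _ (subset_span ⟨_, hinv, rfl⟩)

theorem b_mem_span_commutators [NeZero d] (hζ : IsPrimitiveRoot ζ d)
    {a b' : ℤ} {c : ZMod d} {e f : ℤ} {g : ZMod d} (hcoeff : c * (e - f) ≠ g * (a - b')) :
    S.b (a + e) (b' + f) (c + g) ∈ span ℂ {x : A | ∃ y z : A, x = y * z - z * y} := by
  rw [← smul_mem_iff _ (mt (commutator_coeff_eq_zero_iff hζ ..).1 hcoeff), ← S.b_commutator]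
  exact subset_span ⟨_, _, rfl⟩

theorem basis_mem_span_commutators [NeZero d] (hζ : IsPrimitiveRoot ζ d)
    {p : ℤ × ℤ × ZMod d} (hp : p ∉ invariantIndices d) :
    S.basis p ∈ span ℂ {x : A | ∃ y z : A, x = y * z - z * y} := by
  obtain ⟨a, b', c⟩ := p
  rw [S.basis_eq]
  by_cases hc : c = 0
  · subst hc
    have hab : (a : ZMod d) ≠ b' := fun h => hp ⟨rfl, h⟩
    simpa using S.b_mem_span_commutators hζ (a := a) (b' := b') (c := 1) (e := 0) (f := 0)
      (g := -1) fun h => hab (by linear_combination h)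
  · simpa using S.b_mem_span_commutators hζ (a := a - 1) (b' := b') (c := c) (e := 1) (f := 0)
      (g := 0) (by simpa using hc)

theorem span_commutators_eq [NeZero d] (hζ : IsPrimitiveRoot ζ d) :
    span ℂ {x : A | ∃ y z : A, x = y * z - z * y} =
      span ℂ (S.basis '' (invariantIndices d)ᶜ) :=
  le_antisymm (span_commutators_le_of_basis S.basis (S.basis_commutator_mem_span_compl hζ))
    (span_le.2 <| by
      rintro _ ⟨p, hp, rfl⟩
      exact S.basis_mem_span_commutators hζ hp)

theorem invariant_monomials_eq :
    {x : A | ∃ a b' : ℤ, Int.ModEq (d : ℤ) a b' ∧ x = S.b a b' 0} =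
      S.basis '' invariantIndices d := by
  ext x
  constructor
  · rintro ⟨a, b', h, rfl⟩
    exact ⟨(a, b', 0), ⟨rfl, (ZMod.intCast_eq_intCast_iff _ _ _).2 h⟩, S.basis_eq _ _ _⟩
  · rintro ⟨⟨a, b', c⟩, ⟨rfl, h⟩, rfl⟩
    exact ⟨a, b', (ZMod.intCast_eq_intCast_iff _ _ _).1 h, S.basis_eq _ _ _⟩

end SkewLaurent2Algebra

theorem stmt_13 (d : ℕ) (hd : 0 < d) (ζ : ℂ) (hζ : IsPrimitiveRoot ζ d)
    (A : Type) [Ring A] [Algebra ℂ A] (S : SkewLaurent2Algebra d ζ A)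
    (Inv C : Submodule ℂ A)
    (hInv : Inv = Submodule.span ℂ
        {x : A | ∃ a b' : ℤ, Int.ModEq (d : ℤ) a b' ∧ x = S.b a b' 0})
    (hC : C = Submodule.span ℂ {x : A | ∃ y z : A, x = y * z - z * y}) :
    (⊤ : Submodule ℂ A) = Inv ⊔ C ∧ Inv ⊓ C = ⊥ := by
  have : NeZero d := ⟨hd.ne'⟩
  have hcompl : IsCompl Inv C := by
    rw [hInv, hC, S.invariant_monomials_eq, S.span_commutators_eq hζ]
    exact S.basis.linearIndependent.isCompl_span_image S.basis.span_eq isCompl_compl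
  exact ⟨hcompl.sup_eq_top.symm, hcompl.inf_eq_bot⟩
end
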